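/- arXiv:1906.08540 — 2 statements merged into one kernel-verified Lean document; each statement's English description precedes it below -/
import Mathlib

section
/- Proposition 1 (bounds on the screened dual variable u): For every i ∈ I, the screened optimal solution satisfies max( ε/κ , (min_{i'∈I} μ_{i'}) / ( ε(m − m_b) + ((max_{j∈J} ν_j)/(n ε κ K_min))·m_b ) ) ≤ e^{u^sc_i} ≤ (max_{i'∈I} μ_{i'}) / (m ε K_min). -/
open scoped Classical

open Finset Function Real

/-! At the screened optimum the lower-bound constraints are inactive on `I` and `J`, so the
partial derivatives of `Ψ_κ` vanish there:
`e^{u_i} ∑_j K_ij e^{v_j} = κ μ_i` for `i ∈ I` and `e^{v_j} ∑_i K_ij e^{u_i} = ν_j / κ` for `j ∈ J`.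
With `K_min ≤ K_ij ≤ 1` and the feasibility bounds `e^{u_i} ≥ ε/κ`, `e^{v_j} ≥ εκ`, the second
identity gives `e^{v_j} ≤ ν_j / (n ε K_min)` on `J`, while `e^{v_j} = εκ` off `J`. This bounds the
row sums `∑_j K_ij e^{v_j}` from both sides, and the first identity turns that into the bounds
on `e^{u_i}`. -/

theorem div_le_of_le_mul_of_le {y T c U : ℝ} (hy : 0 < y) (hc : 0 < c) (hTU : T ≤ U)
    (h : c ≤ y * T) : c / U ≤ y := by
  have hT : 0 < T := pos_of_mul_pos_right (hc.trans_le h) hy.le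
  exact (div_le_iff₀ (hT.trans_le hTU)).2 (h.trans (mul_le_mul_of_nonneg_left hTU hy.le))

section Sums

variable {ι : Type*} [Fintype ι]

theorem card_mul_le_sum_mul {f g : ι → ℝ} {a b : ℝ} (ha : 0 ≤ a) (hb : 0 ≤ b)
    (hf : ∀ i, a ≤ f i) (hg : ∀ i, b ≤ g i) : Fintype.card ι * (a * b) ≤ ∑ i, f i * g i := by
  simpa using card_nsmul_le_sum univ (fun i => f i * g i) (a * b)
    fun i _ => mul_le_mul (hf i) (hg i) hb (ha.trans (hf i))

theorem le_div_of_mul_sum_mul_le [Nonempty ι] {f g : ι → ℝ} {a b y c : ℝ} (ha : 0 < a) (hb : 0 < b)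
    (hf : ∀ i, a ≤ f i) (hg : ∀ i, b ≤ g i) (hy : 0 ≤ y) (h : y * ∑ i, f i * g i ≤ c) :
    y ≤ c / (Fintype.card ι * (a * b)) :=
  (le_div_iff₀ (by positivity)).2
    ((mul_le_mul_of_nonneg_left (card_mul_le_sum_mul ha.le hb.le hf hg) hy).trans h)

theorem sum_mul_le_of_le_one [DecidableEq ι] {f g : ι → ℝ} {b V : ℝ} (s : Finset ι)
    (hf : ∀ i, f i ≤ 1) (hg : ∀ i, 0 ≤ g i) (hs : ∀ i ∈ s, g i ≤ V) (hsc : ∀ i ∉ s, g i = b) :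
    ∑ i, f i * g i ≤ (Fintype.card ι - #s) * b + #s * V := by
  have hcompl : ∑ i ∈ sᶜ, g i = #sᶜ * b := by
    rw [sum_congr rfl fun i hi => hsc i (mem_compl.1 hi), sum_const, nsmul_eq_mul]
  calc ∑ i, f i * g i ≤ ∑ i, g i := sum_le_sum fun i _ => mul_le_of_le_one_left (hg i) (hf i)
    _ = ∑ i ∈ sᶜ, g i + ∑ i ∈ s, g i := (sum_compl_add_sum s g).symm
    _ ≤ #sᶜ * b + #s * V := by
      rw [hcompl]
      simpa using sum_le_card_nsmul s g V hs
    _ = (Fintype.card ι - #s) * b + #s * V := by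
      rw [card_compl, Nat.cast_sub (card_le_univ s)]

end Sums

section Stationarity

variable {ι : Type*} [Fintype ι] [DecidableEq ι]

theorem sum_apply_update_eq (g : ι → ℝ → ℝ) (w : ι → ℝ) (i₀ : ι) (x : ℝ) :
    ∑ i, g i (update w i₀ x i) = ∑ i, g i (w i) + (g i₀ x - g i₀ (w i₀)) := by
  rw [← sub_eq_iff_eq_add', ← sum_sub_distrib,
    Fintype.sum_eq_single i₀ fun i hi => by rw [update_of_ne hi, sub_self], update_self]

theorem exp_mul_eq_of_isLocalMin_update (a c w : ι → ℝ) (i₀ : ι)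
    (h : IsLocalMin (fun x => ∑ i, (exp (update w i₀ x i) * a i - update w i₀ x i * c i)) (w i₀)) :
    exp (w i₀) * a i₀ = c i₀ := by
  let g : ι → ℝ → ℝ := fun i y => exp y * a i - y * c i
  have hderiv : HasDerivAt (fun x => ∑ i, g i (w i) + (g i₀ x - g i₀ (w i₀)))
      (exp (w i₀) * a i₀ - 1 * c i₀) (w i₀) :=
    ((((hasDerivAt_exp _).mul_const _).sub ((hasDerivAt_id _).mul_const _)).sub_const _).const_add _
  simp_rw [← sum_apply_update_eq g w i₀] at hderiv
  linarith [h.hasDerivAt_eq_zero hderiv]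

end Stationarity

noncomputable section

variable {ι ι' : Type*}

/-- The paper's `F_sc` is `screenedSet I (ε / κ) ×ˢ screenedSet J (ε * κ)`. -/
def screenedSet (I : Finset ι) (b : ℝ) : Set (ι → ℝ) :=
  {u | (∀ i, b ≤ exp (u i)) ∧ ∀ i ∉ I, u i = log b}

theorem update_mem_screenedSet [DecidableEq ι] {I : Finset ι} {b x : ℝ} {u : ι → ℝ} {i : ι}
    (hu : u ∈ screenedSet I b) (hi : i ∈ I) (hx : b ≤ exp x) : update u i x ∈ screenedSet I b := by
  refine ⟨fun i' => ?_, fun i' hi' => ?_⟩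
  · rcases eq_or_ne i' i with rfl | hne
    · rwa [update_self]
    · rw [update_of_ne hne]; exact hu.1 i'
  · rw [update_of_ne (ne_of_mem_of_not_mem hi hi').symm]; exact hu.2 i' hi'

variable [Fintype ι] [Fintype ι']

def sinkhornDual (K : ι → ι' → ℝ) (κ : ℝ) (μ : ι → ℝ) (ν : ι' → ℝ) (u : ι → ℝ) (v : ι' → ℝ) :
    ℝ :=
  (∑ i, ∑ j, exp (u i) * K i j * exp (v j)) - κ * (∑ i, u i * μ i) - (1 / κ) * (∑ j, v j * ν j)

variable (K : ι → ι' → ℝ) (κ : ℝ) (μ : ι → ℝ) (ν : ι' → ℝ)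

theorem sinkhornDual_eq_sum (u : ι → ℝ) (v : ι' → ℝ) :
    sinkhornDual K κ μ ν u v =
      ∑ i, (exp (u i) * ∑ j, K i j * exp (v j) - u i * (κ * μ i)) - 1 / κ * ∑ j, v j * ν j := by
  simp only [sinkhornDual, sum_sub_distrib, mul_sum, mul_assoc, mul_left_comm κ]

theorem sinkhornDual_comm (u : ι → ℝ) (v : ι' → ℝ) :
    sinkhornDual K κ μ ν u v = sinkhornDual (fun j i => K i j) (1 / κ) ν μ v u := by
  rw [sinkhornDual, sinkhornDual, sum_comm, one_div_one_div]
  simp only [mul_comm, mul_left_comm, mul_assoc]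
  ring

variable {K κ μ ν}

theorem exp_mul_sum_eq_of_isMinOn_fst [DecidableEq ι] {I : Finset ι} {b : ℝ} {u : ι → ℝ}
    {v : ι' → ℝ} {i : ι} (hmin : IsMinOn (sinkhornDual K κ μ ν · v) (screenedSet I b) u)
    (hu : u ∈ screenedSet I b) (hi : i ∈ I) (hb : b < exp (u i)) :
    exp (u i) * ∑ j, K i j * exp (v j) = κ * μ i := by
  refine exp_mul_eq_of_isLocalMin_update (fun i => ∑ j, K i j * exp (v j)) (κ * μ ·) u i ?_
  filter_upwards [(continuous_exp.tendsto (u i)).eventually (lt_mem_nhds hb)] with x hx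
  have hle := isMinOn_iff.1 hmin _ (update_mem_screenedSet hu hi hx.le)
  simp only [sinkhornDual_eq_sum, update_eq_self] at hle ⊢
  linarith

theorem exp_mul_sum_eq_of_isMinOn_snd [DecidableEq ι'] {J : Finset ι'} {b : ℝ} {u : ι → ℝ}
    {v : ι' → ℝ} {j : ι'} (hmin : IsMinOn (sinkhornDual K κ μ ν u ·) (screenedSet J b) v)
    (hv : v ∈ screenedSet J b) (hj : j ∈ J) (hb : b < exp (v j)) :
    exp (v j) * ∑ i, K i j * exp (u i) = 1 / κ * ν j := by
  simp_rw [sinkhornDual_comm K κ μ ν u] at hmin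
  exact exp_mul_sum_eq_of_isMinOn_fst hmin hv hj hb

end

theorem bounds_on_screened_u_general
    (n m : ℕ) (hn : 0 < n) (hm : 0 < m)
    (C : Fin n → Fin m → ℝ) (hC : ∀ i j, 0 ≤ C i j)
    (η : ℝ) (hη : 0 < η)
    (K : Fin n → Fin m → ℝ) (hK : ∀ i j, K i j = Real.exp (-(C i j) / η))
    (μ : Fin n → ℝ) (ν : Fin m → ℝ)
    (hμpos : ∀ i, 0 < μ i)
    (ε κ : ℝ) (hε : 0 < ε) (hκ : 0 < κ)
    (I : Finset (Fin n))
    (J : Finset (Fin m))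
    (Kmin : ℝ) (hKmin_le : ∀ i j, Kmin ≤ K i j) (hKmin_mem : ∃ i j, K i j = Kmin)
    (usc : Fin n → ℝ) (vsc : Fin m → ℝ)
    (husc_feas : ∀ i, ε / κ ≤ Real.exp (usc i))
    (hvsc_feas : ∀ j, ε * κ ≤ Real.exp (vsc j))
    (husc_out : ∀ i ∉ I, usc i = Real.log (ε / κ))
    (hvsc_out : ∀ j ∉ J, vsc j = Real.log (ε * κ))
    (hsc_min : ∀ (u : Fin n → ℝ) (v : Fin m → ℝ),
      (∀ i, ε / κ ≤ Real.exp (u i)) → (∀ j, ε * κ ≤ Real.exp (v j)) →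
      (∀ i ∉ I, u i = Real.log (ε / κ)) → (∀ j ∉ J, v j = Real.log (ε * κ)) →
      (∑ i, ∑ j, Real.exp (usc i) * K i j * Real.exp (vsc j))
          - κ * (∑ i, usc i * μ i) - (1 / κ) * (∑ j, vsc j * ν j)
        ≤ (∑ i, ∑ j, Real.exp (u i) * K i j * Real.exp (v j))
          - κ * (∑ i, u i * μ i) - (1 / κ) * (∑ j, v j * ν j))
    (hactive_u : ∀ i ∈ I, ε / κ < Real.exp (usc i))
    (hactive_v : ∀ j ∈ J, ε * κ < Real.exp (vsc j))
    (μminI μmaxI νmaxJ : ℝ)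
    (hμminI : (∃ i ∈ I, μ i = μminI) ∧ ∀ i ∈ I, μminI ≤ μ i)
    (hμmaxI : (∃ i ∈ I, μ i = μmaxI) ∧ ∀ i ∈ I, μ i ≤ μmaxI)
    (hνmaxJ : (∃ j ∈ J, ν j = νmaxJ) ∧ ∀ j ∈ J, ν j ≤ νmaxJ) :
    ∀ i ∈ I,
      max (ε / κ)
          (μminI / (ε * ((m : ℝ) - J.card) + νmaxJ / ((n : ℝ) * ε * κ * Kmin) * J.card))
        ≤ Real.exp (usc i) ∧
      Real.exp (usc i) ≤ μmaxI / ((m : ℝ) * ε * Kmin) := by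
  have hK_pos : ∀ i j, 0 < K i j := fun i j => hK i j ▸ exp_pos _
  have hK_le_one : ∀ i j, K i j ≤ 1 := fun i j => (hK i j).trans_le <|
    exp_le_one_iff.2 (div_nonpos_of_nonpos_of_nonneg (neg_nonpos.2 (hC i j)) hη.le)
  have hKmin_pos : 0 < Kmin := let ⟨i, j, h⟩ := hKmin_mem; h ▸ hK_pos i j
  have : Nonempty (Fin n) := ⟨⟨0, hn⟩⟩
  have : Nonempty (Fin m) := ⟨⟨0, hm⟩⟩
  have hmin_u : IsMinOn (sinkhornDual K κ μ ν · vsc) (screenedSet I (ε / κ)) usc :=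
    isMinOn_iff.2 fun u hu => hsc_min u vsc hu.1 hvsc_feas hu.2 hvsc_out
  have hmin_v : IsMinOn (sinkhornDual K κ μ ν usc ·) (screenedSet J (ε * κ)) vsc :=
    isMinOn_iff.2 fun v hv => hsc_min usc v husc_feas hv.1 husc_out hv.2
  have hv_le : ∀ j ∈ J, exp (vsc j) ≤ νmaxJ / (n * ε * Kmin) := fun j hj => by
    have hcol := exp_mul_sum_eq_of_isMinOn_snd hmin_v ⟨hvsc_feas, hvsc_out⟩ hj (hactive_v j hj)
    calc exp (vsc j) ≤ 1 / κ * νmaxJ / (Fintype.card (Fin n) * (Kmin * (ε / κ))) :=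
          le_div_of_mul_sum_mul_le hKmin_pos (by positivity) (hKmin_le · j) husc_feas
            (exp_pos _).le (hcol.trans_le (by gcongr; exact hνmaxJ.2 j hj))
      _ = νmaxJ / (n * ε * Kmin) := by rw [Fintype.card_fin]; field_simp
  intro i hi
  have hrow := exp_mul_sum_eq_of_isMinOn_fst hmin_u ⟨husc_feas, husc_out⟩ hi (hactive_u i hi)
  have hrow_le : ∑ j, K i j * exp (vsc j) ≤ κ * (ε * (m - #J) + νmaxJ / (n * ε * κ * Kmin) * #J) :=
    calc ∑ j, K i j * exp (vsc j)
          ≤ (Fintype.card (Fin m) - #J) * (ε * κ) + #J * (νmaxJ / (n * ε * Kmin)) :=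
          sum_mul_le_of_le_one J (hK_le_one i) (fun j => (exp_pos _).le) hv_le
            fun j hj => by rw [hvsc_out j hj, exp_log (by positivity)]
      _ = κ * (ε * (m - #J) + νmaxJ / (n * ε * κ * Kmin) * #J) := by
          rw [Fintype.card_fin]; field_simp
  have hμminI_pos : 0 < μminI := let ⟨i', _, h⟩ := hμminI.1; h ▸ hμpos i'
  refine ⟨max_le (husc_feas i) ?_, ?_⟩
  · exact (mul_div_mul_left μminI _ hκ.ne').symm.trans_le <| div_le_of_le_mul_of_le (exp_pos _)
      (by positivity) hrow_le (hrow ▸ by gcongr; exact hμminI.2 i hi)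
  · calc exp (usc i) ≤ κ * μmaxI / (Fintype.card (Fin m) * (Kmin * (ε * κ))) :=
          le_div_of_mul_sum_mul_le hKmin_pos (by positivity) (hKmin_le i) hvsc_feas
            (exp_pos _).le (hrow.trans_le (by gcongr; exact hμmaxI.2 i hi))
      _ = μmaxI / (m * ε * Kmin) := by rw [Fintype.card_fin]; field_simp

theorem bounds_on_screened_u
    (n m : ℕ) (hn : 0 < n) (hm : 0 < m)
    (C : Fin n → Fin m → ℝ) (hC : ∀ i j, 0 ≤ C i j)
    (η : ℝ) (hη : 0 < η)
    (K : Fin n → Fin m → ℝ) (hK : ∀ i j, K i j = Real.exp (-(C i j) / η))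
    (μ : Fin n → ℝ) (ν : Fin m → ℝ)
    (hμpos : ∀ i, 0 < μ i) (hνpos : ∀ j, 0 < ν j)
    (hμsum : ∑ i, μ i = 1) (hνsum : ∑ j, ν j = 1)
    (ε κ : ℝ) (hε : 0 < ε) (hκ : 0 < κ)
    (I : Finset (Fin n)) (hI : ∀ i, i ∈ I ↔ ε ^ 2 / κ * (∑ j, K i j) ≤ μ i)
    (J : Finset (Fin m)) (hJ : ∀ j, j ∈ J ↔ κ * ε ^ 2 * (∑ i, K i j) ≤ ν j)
    (hIne : I.Nonempty) (hJne : J.Nonempty)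
    (Kmin : ℝ) (hKmin_le : ∀ i j, Kmin ≤ K i j) (hKmin_mem : ∃ i j, K i j = Kmin)
    (usc : Fin n → ℝ) (vsc : Fin m → ℝ)
    (husc_feas : ∀ i, ε / κ ≤ Real.exp (usc i))
    (hvsc_feas : ∀ j, ε * κ ≤ Real.exp (vsc j))
    (husc_out : ∀ i ∉ I, usc i = Real.log (ε / κ))
    (hvsc_out : ∀ j ∉ J, vsc j = Real.log (ε * κ))
    (hsc_min : ∀ (u : Fin n → ℝ) (v : Fin m → ℝ),
      (∀ i, ε / κ ≤ Real.exp (u i)) → (∀ j, ε * κ ≤ Real.exp (v j)) →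
      (∀ i ∉ I, u i = Real.log (ε / κ)) → (∀ j ∉ J, v j = Real.log (ε * κ)) →
      (∑ i, ∑ j, Real.exp (usc i) * K i j * Real.exp (vsc j))
          - κ * (∑ i, usc i * μ i) - (1 / κ) * (∑ j, vsc j * ν j)
        ≤ (∑ i, ∑ j, Real.exp (u i) * K i j * Real.exp (v j))
          - κ * (∑ i, u i * μ i) - (1 / κ) * (∑ j, v j * ν j))
    (hactive_u : ∀ i ∈ I, ε / κ < Real.exp (usc i))
    (hactive_v : ∀ j ∈ J, ε * κ < Real.exp (vsc j))
    (μminI μmaxI νmaxJ : ℝ)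
    (hμminI : (∃ i ∈ I, μ i = μminI) ∧ ∀ i ∈ I, μminI ≤ μ i)
    (hμmaxI : (∃ i ∈ I, μ i = μmaxI) ∧ ∀ i ∈ I, μ i ≤ μmaxI)
    (hνmaxJ : (∃ j ∈ J, ν j = νmaxJ) ∧ ∀ j ∈ J, ν j ≤ νmaxJ) :
    ∀ i ∈ I,
      max (ε / κ)
          (μminI / (ε * ((m : ℝ) - J.card) + νmaxJ / ((n : ℝ) * ε * κ * Kmin) * J.card))
        ≤ Real.exp (usc i) ∧
      Real.exp (usc i) ≤ μmaxI / ((m : ℝ) * ε * Kmin) :=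
  bounds_on_screened_u_general n m hn hm C hC η hη K hK μ ν hμpos ε κ hε hκ I J Kmin hKmin_le
    hKmin_mem usc vsc husc_feas hvsc_feas husc_out hvsc_out hsc_min hactive_u hactive_v μminI μmaxI
    νmaxJ hμminI hμmaxI hνmaxJ
end

section
/- Proposition 1 (bounds on the screened dual variable v): For every j ∈ J, the screened optimal solution satisfies max( εκ , (min_{j'∈J} ν_{j'}) / ( ε(n − n_b) + ((κ · max_{i∈I} μ_i)/(m ε K_min))·n_b ) ) ≤ e^{v^sc_j} ≤ (max_{j'∈J} ν_{j'}) / (n ε K_min). -/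
/-!
Every active coordinate of the screened minimiser is interior to its constraint, so moving it alone
is a feasible perturbation in both directions, and along such a line `Ψ_κ` is `A eᵗ - c t` up to a
constant; hence `A = c`, i.e. the first-order conditions
`e^{uᵢ} ∑ⱼ Kᵢⱼ e^{vⱼ} = κ μᵢ` (`i ∈ I`) and `(∑ᵢ e^{uᵢ} Kᵢⱼ) e^{vⱼ} = νⱼ / κ` (`j ∈ J`).
With `e^{uᵢ} ≥ ε/κ` and `Kᵢⱼ ≥ K_min` the second gives the upper bound on `e^{vⱼ}`.
With `e^{vⱼ} ≥ εκ` the first gives `e^{uᵢ} ≤ max_I μ / (m ε K_min)` on `I`; since `e^{uᵢ} = ε/κ`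
off `I` and `K ≤ 1`, `κ ∑ᵢ e^{uᵢ} Kᵢⱼ` is at most the denominator of the lower bound, and the
second condition turns this into the lower bound.
-/

open scoped Classical

open Real Filter Topology Function

lemma eq_of_isLocalMin_mul_exp_sub_mul {A c : ℝ}
    (h : IsLocalMin (fun t => A * exp t - c * t) 0) : A = c := by
  have hderiv : HasDerivAt (fun t => A * exp t - c * t) (A * exp 0 - c * 1) 0 :=
    ((hasDerivAt_exp 0).const_mul A).sub ((hasDerivAt_id 0).const_mul c)
  simpa [sub_eq_zero] using h.hasDerivAt_eq_zero hderiv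

lemma eventually_forall_le_exp_update {ι : Type*} [DecidableEq ι] {x : ι → ℝ} {a : ℝ} {k : ι}
    (hx : ∀ i, a ≤ exp (x i)) (hk : a < exp (x k)) :
    ∀ᶠ t in 𝓝 0, ∀ i, a ≤ exp (update x k (x k + t) i) := by
  have hcont : Continuous fun t => exp (x k + t) := by fun_prop
  have hopen : ∀ᶠ t in 𝓝 (0 : ℝ), a < exp (x k + t) :=
    continuousAt_const.eventually_lt hcont.continuousAt (by simpa using hk)
  filter_upwards [hopen] with t ht i
  rcases eq_or_ne i k with rfl | hik
  · simpa using ht.le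
  · simpa [hik] using hx i

lemma Fintype.sum_apply_update {ι : Type*} [Fintype ι] [DecidableEq ι] (f : ι → ℝ → ℝ) (x : ι → ℝ)
    (k : ι) (y : ℝ) :
    ∑ i, f i (update x k y i) = ∑ i, f i (x i) + (f k y - f k (x k)) := by
  rw [Fintype.sum_eq_add_sum_compl k, Fintype.sum_eq_add_sum_compl k (fun i => f i (x i)),
    update_self]
  have hrest : ∑ i ∈ {k}ᶜ, f i (update x k y i) = ∑ i ∈ {k}ᶜ, f i (x i) :=
    Finset.sum_congr rfl fun i hi => by rw [update_of_ne (by simpa using hi)]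
  rw [hrest]
  ring

section ScreenedFeasible

variable {ι ι' : Type*}

/-- `(u, v) ∈ F_sc`. -/
structure ScreenedFeasible (ε κ : ℝ) (I : Finset ι) (J : Finset ι') (u : ι → ℝ) (v : ι' → ℝ) :
    Prop where
  le_exp_left : ∀ i, ε / κ ≤ exp (u i)
  le_exp_right : ∀ j, ε * κ ≤ exp (v j)
  eq_log_of_notMem_left : ∀ i ∉ I, u i = log (ε / κ)
  eq_log_of_notMem_right : ∀ j ∉ J, v j = log (ε * κ)

variable {ε κ : ℝ} {I : Finset ι} {J : Finset ι'} {u : ι → ℝ} {v : ι' → ℝ}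

lemma ScreenedFeasible.eventually_update_left [DecidableEq ι] (h : ScreenedFeasible ε κ I J u v)
    {i : ι} (hi : i ∈ I) (hact : ε / κ < exp (u i)) :
    ∀ᶠ t in 𝓝 0, ScreenedFeasible ε κ I J (update u i (u i + t)) v := by
  filter_upwards [eventually_forall_le_exp_update h.le_exp_left hact] with t ht
  refine ⟨ht, h.le_exp_right, fun i' hi' => ?_, h.eq_log_of_notMem_right⟩
  rw [update_of_ne (ne_of_mem_of_not_mem hi hi').symm, h.eq_log_of_notMem_left i' hi']

lemma ScreenedFeasible.eventually_update_right [DecidableEq ι'] (h : ScreenedFeasible ε κ I J u v)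
    {j : ι'} (hj : j ∈ J) (hact : ε * κ < exp (v j)) :
    ∀ᶠ t in 𝓝 0, ScreenedFeasible ε κ I J u (update v j (v j + t)) := by
  filter_upwards [eventually_forall_le_exp_update h.le_exp_right hact] with t ht
  refine ⟨h.le_exp_left, ht, h.eq_log_of_notMem_left, fun j' hj' => ?_⟩
  rw [update_of_ne (ne_of_mem_of_not_mem hj hj').symm, h.eq_log_of_notMem_right j' hj']

end ScreenedFeasible

section ScreenedDual

variable {ι ι' : Type*} [Fintype ι] [Fintype ι']
  (K : ι → ι' → ℝ) (μ : ι → ℝ) (ν : ι' → ℝ) (κ : ℝ)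

/-- `Ψ_κ(u, v)`. -/
noncomputable def dualObjective (u : ι → ℝ) (v : ι' → ℝ) : ℝ :=
  (∑ i, ∑ j, exp (u i) * K i j * exp (v j)) - κ * (∑ i, u i * μ i) - (1 / κ) * (∑ j, v j * ν j)

lemma dualObjective_update_left [DecidableEq ι] (u : ι → ℝ) (v : ι' → ℝ) (i : ι) (t : ℝ) :
    dualObjective K μ ν κ (update u i (u i + t)) v =
      dualObjective K μ ν κ u v + exp (u i) * (∑ j, K i j * exp (v j)) * (exp t - 1)
        - κ * μ i * t := by
  have hexp := Fintype.sum_apply_update (fun i' w => exp w * ∑ j, K i' j * exp (v j)) u i (u i + t)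
  have hlin := Fintype.sum_apply_update (fun i' w => w * μ i') u i (u i + t)
  simp only [dualObjective, mul_assoc, ← Finset.mul_sum] at hexp hlin ⊢
  rw [hexp, hlin, exp_add]
  ring

lemma dualObjective_update_right [DecidableEq ι'] (u : ι → ℝ) (v : ι' → ℝ) (j : ι') (t : ℝ) :
    dualObjective K μ ν κ u (update v j (v j + t)) =
      dualObjective K μ ν κ u v + (∑ i, exp (u i) * K i j) * exp (v j) * (exp t - 1)
        - ν j / κ * t := by
  have hswap : ∀ v : ι' → ℝ, ∑ i, ∑ j, exp (u i) * K i j * exp (v j)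
      = ∑ j, (∑ i, exp (u i) * K i j) * exp (v j) := fun v => by
    rw [Finset.sum_comm]; simp only [Finset.sum_mul]
  have hexp :=
    Fintype.sum_apply_update (fun j' w => (∑ i, exp (u i) * K i j') * exp w) v j (v j + t)
  have hlin := Fintype.sum_apply_update (fun j' w => w * ν j') v j (v j + t)
  rw [dualObjective, dualObjective, hswap, hswap, hexp, hlin, exp_add]
  ring

variable {K μ ν κ} {ε : ℝ} {I : Finset ι} {J : Finset ι'} {u : ι → ℝ} {v : ι' → ℝ}

lemma exp_mul_sum_mul_exp_eq_of_isMinOn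
    (hmin : IsMinOn (uncurry (dualObjective K μ ν κ)) {p | ScreenedFeasible ε κ I J p.1 p.2} (u, v))
    (hfeas : ScreenedFeasible ε κ I J u v) {i : ι} (hi : i ∈ I) (hact : ε / κ < exp (u i)) :
    exp (u i) * (∑ j, K i j * exp (v j)) = κ * μ i := by
  classical
  apply eq_of_isLocalMin_mul_exp_sub_mul
  filter_upwards [hfeas.eventually_update_left hi hact] with t ht
  have hle : dualObjective K μ ν κ u v ≤ dualObjective K μ ν κ (update u i (u i + t)) v :=
    isMinOn_iff.mp hmin (update u i (u i + t), v) ht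
  rw [dualObjective_update_left] at hle
  rw [exp_zero]
  linarith

lemma sum_exp_mul_mul_exp_eq_of_isMinOn
    (hmin : IsMinOn (uncurry (dualObjective K μ ν κ)) {p | ScreenedFeasible ε κ I J p.1 p.2} (u, v))
    (hfeas : ScreenedFeasible ε κ I J u v) {j : ι'} (hj : j ∈ J) (hact : ε * κ < exp (v j)) :
    (∑ i, exp (u i) * K i j) * exp (v j) = ν j / κ := by
  classical
  apply eq_of_isLocalMin_mul_exp_sub_mul
  filter_upwards [hfeas.eventually_update_right hj hact] with t ht
  have hle : dualObjective K μ ν κ u v ≤ dualObjective K μ ν κ u (update v j (v j + t)) :=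
    isMinOn_iff.mp hmin (u, update v j (v j + t)) ht
  rw [dualObjective_update_right] at hle
  rw [exp_zero]
  linarith

end ScreenedDual

section Bounds

variable {ι ι' : Type*} {K : ι → ι' → ℝ} {μ : ι → ℝ} {ν : ι' → ℝ}
  {ε κ Kmin : ℝ} {u : ι → ℝ} {v : ι' → ℝ}

lemma exp_le_div_of_exp_mul_sum_mul_exp_eq [Fintype ι'] [Nonempty ι'] {i : ι} {μmax : ℝ}
    (hstat : exp (u i) * (∑ j, K i j * exp (v j)) = κ * μ i)
    (hv : ∀ j, ε * κ ≤ exp (v j)) (hK : ∀ j, Kmin ≤ K i j) (hε : 0 < ε) (hκ : 0 < κ)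
    (hKmin : 0 < Kmin) (hμ : μ i ≤ μmax) :
    exp (u i) ≤ μmax / (Fintype.card ι' * ε * Kmin) := by
  have hsum : Fintype.card ι' * (Kmin * (ε * κ)) ≤ ∑ j, K i j * exp (v j) := by
    simpa using Finset.univ.card_nsmul_le_sum _ _ fun j _ =>
      mul_le_mul (hK j) (hv j) (by positivity) (hKmin.le.trans (hK j))
  rw [le_div_iff₀ (by positivity)]
  refine le_of_mul_le_mul_left ?_ hκ
  calc κ * (exp (u i) * (Fintype.card ι' * ε * Kmin))
      = exp (u i) * (Fintype.card ι' * (Kmin * (ε * κ))) := by ring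
    _ ≤ κ * μ i := hstat ▸ mul_le_mul_of_nonneg_left hsum (exp_pos _).le
    _ ≤ κ * μmax := mul_le_mul_of_nonneg_left hμ hκ.le

lemma exp_le_div_of_sum_exp_mul_mul_exp_eq [Fintype ι] [Nonempty ι] {j : ι'} {νmax : ℝ}
    (hstat : (∑ i, exp (u i) * K i j) * exp (v j) = ν j / κ)
    (hu : ∀ i, ε / κ ≤ exp (u i)) (hK : ∀ i, Kmin ≤ K i j) (hε : 0 < ε) (hκ : 0 < κ)
    (hKmin : 0 < Kmin) (hν : ν j ≤ νmax) :
    exp (v j) ≤ νmax / (Fintype.card ι * ε * Kmin) := by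
  have hsum : Fintype.card ι * (ε / κ * Kmin) ≤ ∑ i, exp (u i) * K i j := by
    simpa using Finset.univ.card_nsmul_le_sum _ _ fun i _ =>
      mul_le_mul (hu i) (hK i) hKmin.le (exp_pos _).le
  rw [le_div_iff₀ (by positivity)]
  calc exp (v j) * (Fintype.card ι * ε * Kmin)
      = κ * (Fintype.card ι * (ε / κ * Kmin) * exp (v j)) := by field_simp
    _ ≤ κ * (ν j / κ) := by
      rw [← hstat]; gcongr
    _ ≤ νmax := by rwa [mul_div_cancel₀ _ hκ.ne']

lemma mul_sum_exp_mul_le [Fintype ι] [DecidableEq ι] {I : Finset ι} {j : ι'} {B : ℝ}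
    (hI : ∀ i ∈ I, exp (u i) ≤ B) (hIc : ∀ i ∉ I, exp (u i) = ε / κ)
    (hK1 : ∀ i, K i j ≤ 1) (hε : 0 ≤ ε) (hκ : 0 < κ) :
    κ * ∑ i, exp (u i) * K i j ≤ ε * (Fintype.card ι - I.card) + κ * B * I.card := by
  have hin : ∑ i ∈ I, exp (u i) * K i j ≤ I.card * B := by
    simpa using Finset.sum_le_card_nsmul I _ _ fun i hi =>
      (mul_le_of_le_one_right (exp_pos _).le (hK1 i)).trans (hI i hi)
  have hout : ∑ i ∈ Iᶜ, exp (u i) * K i j ≤ Iᶜ.card * (ε / κ) := by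
    simpa using Finset.sum_le_card_nsmul Iᶜ (fun i => exp (u i) * K i j) _ fun i hi => by
      rw [hIc i (Finset.mem_compl.mp hi)]
      exact mul_le_of_le_one_right (by positivity) (hK1 i)
  rw [Finset.card_compl, Nat.cast_sub I.card_le_univ] at hout
  calc κ * ∑ i, exp (u i) * K i j
      = κ * (∑ i ∈ I, exp (u i) * K i j) + κ * ∑ i ∈ Iᶜ, exp (u i) * K i j := by
        rw [← Finset.sum_add_sum_compl I, mul_add]
    _ ≤ κ * (I.card * B) + κ * ((Fintype.card ι - I.card) * (ε / κ)) := by gcongr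
    _ = ε * (Fintype.card ι - I.card) + κ * B * I.card := by field_simp; ring

lemma div_le_exp_of_sum_exp_mul_mul_exp_eq [Fintype ι] {j : ι'} {νmin D : ℝ}
    (hstat : (∑ i, exp (u i) * K i j) * exp (v j) = ν j / κ)
    (hD : κ * ∑ i, exp (u i) * K i j ≤ D) (hK : ∀ i, 0 ≤ K i j) (hκ : 0 < κ)
    (hν : νmin ≤ ν j) :
    νmin / D ≤ exp (v j) := by
  have hS : 0 ≤ κ * ∑ i, exp (u i) * K i j :=
    mul_nonneg hκ.le (Finset.sum_nonneg fun i _ => mul_nonneg (exp_pos _).le (hK i))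
  refine div_le_of_le_mul₀ (hS.trans hD) (exp_pos _).le ?_
  calc νmin ≤ ν j := hν
    _ = exp (v j) * (κ * ∑ i, exp (u i) * K i j) := by
      rw [mul_left_comm, mul_comm (exp _), hstat, mul_div_cancel₀ _ hκ.ne']
    _ ≤ exp (v j) * D := by gcongr

end Bounds

theorem bounds_on_screened_v_general
    (n m : ℕ) (hn : 0 < n)
    (C : Fin n → Fin m → ℝ) (hC : ∀ i j, 0 ≤ C i j)
    (η : ℝ) (hη : 0 < η)
    (K : Fin n → Fin m → ℝ) (hK : ∀ i j, K i j = Real.exp (-(C i j) / η))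
    (μ : Fin n → ℝ) (ν : Fin m → ℝ)
    (ε κ : ℝ) (hε : 0 < ε) (hκ : 0 < κ)
    (I : Finset (Fin n))
    (J : Finset (Fin m))
    (Kmin : ℝ) (hKmin_le : ∀ i j, Kmin ≤ K i j) (hKmin_mem : ∃ i j, K i j = Kmin)
    (usc : Fin n → ℝ) (vsc : Fin m → ℝ)
    (husc_feas : ∀ i, ε / κ ≤ Real.exp (usc i))
    (hvsc_feas : ∀ j, ε * κ ≤ Real.exp (vsc j))
    (husc_out : ∀ i ∉ I, usc i = Real.log (ε / κ))
    (hvsc_out : ∀ j ∉ J, vsc j = Real.log (ε * κ))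
    (hsc_min : ∀ (u : Fin n → ℝ) (v : Fin m → ℝ),
      (∀ i, ε / κ ≤ Real.exp (u i)) → (∀ j, ε * κ ≤ Real.exp (v j)) →
      (∀ i ∉ I, u i = Real.log (ε / κ)) → (∀ j ∉ J, v j = Real.log (ε * κ)) →
      (∑ i, ∑ j, Real.exp (usc i) * K i j * Real.exp (vsc j))
          - κ * (∑ i, usc i * μ i) - (1 / κ) * (∑ j, vsc j * ν j)
        ≤ (∑ i, ∑ j, Real.exp (u i) * K i j * Real.exp (v j))
          - κ * (∑ i, u i * μ i) - (1 / κ) * (∑ j, v j * ν j))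
    (hactive_u : ∀ i ∈ I, ε / κ < Real.exp (usc i))
    (hactive_v : ∀ j ∈ J, ε * κ < Real.exp (vsc j))
    (νminJ νmaxJ μmaxI : ℝ)
    (hνminJ : (∃ j ∈ J, ν j = νminJ) ∧ ∀ j ∈ J, νminJ ≤ ν j)
    (hνmaxJ : (∃ j ∈ J, ν j = νmaxJ) ∧ ∀ j ∈ J, ν j ≤ νmaxJ)
    (hμmaxI : (∃ i ∈ I, μ i = μmaxI) ∧ ∀ i ∈ I, μ i ≤ μmaxI) :
    ∀ j ∈ J,
      max (ε * κ)
          (νminJ / (ε * ((n : ℝ) - I.card) + κ * μmaxI / ((m : ℝ) * ε * Kmin) * I.card))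
        ≤ Real.exp (vsc j) ∧
      Real.exp (vsc j) ≤ νmaxJ / ((n : ℝ) * ε * Kmin) := by
  intro j hj
  have hKpos : ∀ i j, 0 < K i j := fun i j => hK i j ▸ exp_pos _
  have hK1 : ∀ i j, K i j ≤ 1 := fun i j => by
    rw [hK, exp_le_one_iff]
    exact div_nonpos_of_nonpos_of_nonneg (neg_nonpos.mpr (hC i j)) hη.le
  have hKmin : 0 < Kmin := by
    obtain ⟨i, j, rfl⟩ := hKmin_mem
    exact hKpos i j
  have hfeas : ScreenedFeasible ε κ I J usc vsc := ⟨husc_feas, hvsc_feas, husc_out, hvsc_out⟩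
  have hmin : IsMinOn (uncurry (dualObjective K μ ν κ)) {p | ScreenedFeasible ε κ I J p.1 p.2}
      (usc, vsc) := fun p hp => hsc_min p.1 p.2 hp.1 hp.2 hp.3 hp.4
  have hstat := sum_exp_mul_mul_exp_eq_of_isMinOn hmin hfeas hj (hactive_v j hj)
  have : Nonempty (Fin n) := ⟨⟨0, hn⟩⟩
  have : Nonempty (Fin m) := ⟨j⟩
  have hu_le : ∀ i ∈ I, exp (usc i) ≤ μmaxI / (m * ε * Kmin) := fun i hi => by
    simpa using exp_le_div_of_exp_mul_sum_mul_exp_eq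
      (exp_mul_sum_mul_exp_eq_of_isMinOn hmin hfeas hi (hactive_u i hi)) hvsc_feas (hKmin_le i)
      hε hκ hKmin (hμmaxI.2 i hi)
  have hS := mul_sum_exp_mul_le (j := j) hu_le
    (fun i hi => by rw [husc_out i hi, exp_log (div_pos hε hκ)]) (fun i => hK1 i j) hε.le hκ
  refine ⟨max_le (hvsc_feas j) ?_, ?_⟩
  · exact div_le_exp_of_sum_exp_mul_mul_exp_eq hstat (by simpa [mul_div_assoc] using hS)
      (fun i => (hKpos i j).le) hκ (hνminJ.2 j hj)
  · simpa using exp_le_div_of_sum_exp_mul_mul_exp_eq hstat husc_feas (fun i => hKmin_le i j)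
      hε hκ hKmin (hνmaxJ.2 j hj)

theorem bounds_on_screened_v
    (n m : ℕ) (hn : 0 < n) (hm : 0 < m)
    (C : Fin n → Fin m → ℝ) (hC : ∀ i j, 0 ≤ C i j)
    (η : ℝ) (hη : 0 < η)
    (K : Fin n → Fin m → ℝ) (hK : ∀ i j, K i j = Real.exp (-(C i j) / η))
    (μ : Fin n → ℝ) (ν : Fin m → ℝ)
    (hμpos : ∀ i, 0 < μ i) (hνpos : ∀ j, 0 < ν j)
    (hμsum : ∑ i, μ i = 1) (hνsum : ∑ j, ν j = 1)
    (ε κ : ℝ) (hε : 0 < ε) (hκ : 0 < κ)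
    (I : Finset (Fin n)) (hI : ∀ i, i ∈ I ↔ ε ^ 2 / κ * (∑ j, K i j) ≤ μ i)
    (J : Finset (Fin m)) (hJ : ∀ j, j ∈ J ↔ κ * ε ^ 2 * (∑ i, K i j) ≤ ν j)
    (hIne : I.Nonempty) (hJne : J.Nonempty)
    (Kmin : ℝ) (hKmin_le : ∀ i j, Kmin ≤ K i j) (hKmin_mem : ∃ i j, K i j = Kmin)
    (usc : Fin n → ℝ) (vsc : Fin m → ℝ)
    (husc_feas : ∀ i, ε / κ ≤ Real.exp (usc i))
    (hvsc_feas : ∀ j, ε * κ ≤ Real.exp (vsc j))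
    (husc_out : ∀ i ∉ I, usc i = Real.log (ε / κ))
    (hvsc_out : ∀ j ∉ J, vsc j = Real.log (ε * κ))
    (hsc_min : ∀ (u : Fin n → ℝ) (v : Fin m → ℝ),
      (∀ i, ε / κ ≤ Real.exp (u i)) → (∀ j, ε * κ ≤ Real.exp (v j)) →
      (∀ i ∉ I, u i = Real.log (ε / κ)) → (∀ j ∉ J, v j = Real.log (ε * κ)) →
      (∑ i, ∑ j, Real.exp (usc i) * K i j * Real.exp (vsc j))
          - κ * (∑ i, usc i * μ i) - (1 / κ) * (∑ j, vsc j * ν j)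
        ≤ (∑ i, ∑ j, Real.exp (u i) * K i j * Real.exp (v j))
          - κ * (∑ i, u i * μ i) - (1 / κ) * (∑ j, v j * ν j))
    (hactive_u : ∀ i ∈ I, ε / κ < Real.exp (usc i))
    (hactive_v : ∀ j ∈ J, ε * κ < Real.exp (vsc j))
    (νminJ νmaxJ μmaxI : ℝ)
    (hνminJ : (∃ j ∈ J, ν j = νminJ) ∧ ∀ j ∈ J, νminJ ≤ ν j)
    (hνmaxJ : (∃ j ∈ J, ν j = νmaxJ) ∧ ∀ j ∈ J, ν j ≤ νmaxJ)
    (hμmaxI : (∃ i ∈ I, μ i = μmaxI) ∧ ∀ i ∈ I, μ i ≤ μmaxI) :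
    ∀ j ∈ J,
      max (ε * κ)
          (νminJ / (ε * ((n : ℝ) - I.card) + κ * μmaxI / ((m : ℝ) * ε * Kmin) * I.card))
        ≤ Real.exp (vsc j) ∧
      Real.exp (vsc j) ≤ νmaxJ / ((n : ℝ) * ε * Kmin) :=
  bounds_on_screened_v_general n m hn C hC η hη K hK μ ν ε κ hε hκ I J Kmin hKmin_le hKmin_mem usc
    vsc husc_feas hvsc_feas husc_out hvsc_out hsc_min hactive_u hactive_v νminJ νmaxJ μmaxI hνminJ
    hνmaxJ hμmaxI
end
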